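/- Let n ≥ 1, let m ∈ ℤ with m ≤ −n−1, let N ∈ ℕ, and let C ≥ 0. Suppose a : ℝⁿ → ℂ is smooth and satisfies ‖D^k a(ξ)‖ ≤ C (1 + ‖ξ‖)^{m−k} for all ξ ∈ ℝⁿ and all integers 0 ≤ k ≤ N. Then the Fourier-type integral a^∨(x) := ∫_{ℝⁿ} a(ξ) e^{−i⟨x,ξ⟩} dξ converges absolutely for every x ∈ ℝⁿ, and there is a constant C′ ≥ 0, depending only on n, m, N and C, such that |a^∨(x)| ≤ C′ ‖x‖^{−N} for every x ≠ 0. -/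

import Mathlib

/-!
After the substitution `x = 2π w`, the integral is the Fourier transform `𝓕 a w`. Since `a` is `C^N`
with each `D^j a` dominated by the integrable weight `C (1 + ‖ξ‖)^m` (integrable because
`m < -n`), integrating by parts `N` times bounds `‖w‖^N ‖𝓕 a w‖` by a multiple of the `L¹` norms of
`D^j a`, `j ≤ N`, hence by a multiple of the integral of the weight.
-/

open MeasureTheory Real FourierTransform Module

lemma integrable_one_add_norm_zpow {E : Type*} [NormedAddCommGroup E] [NormedSpace ℝ E]
    [FiniteDimensional ℝ E] [MeasurableSpace E] [BorelSpace E] {μ : Measure E}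
    [μ.IsAddHaarMeasure] {m : ℤ} (hm : (finrank ℝ E : ℤ) < -m) :
    Integrable (fun ξ : E => (1 + ‖ξ‖) ^ m) μ := by
  have hr : (finrank ℝ E : ℝ) < ((-m : ℤ) : ℝ) := by exact_mod_cast hm
  simpa [← Real.rpow_intCast] using integrable_one_add_norm (μ := μ) hr

lemma integrable_norm_iteratedFDeriv_of_le {V F : Type*} [NormedAddCommGroup V] [NormedSpace ℝ V]
    [MeasurableSpace V] [OpensMeasurableSpace V] [NormedAddCommGroup F] [NormedSpace ℝ F]
    {μ : Measure V} {f : V → F} {g : V → ℝ} {N j : ℕ} (hf : ContDiff ℝ N f) (hj : j ≤ N)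
    (hg : Integrable g μ) (hfg : ∀ v, ‖iteratedFDeriv ℝ j f v‖ ≤ g v) :
    Integrable (fun v => ‖iteratedFDeriv ℝ j f v‖) μ :=
  hg.mono' (hf.continuous_iteratedFDeriv (by exact_mod_cast hj)).norm.aestronglyMeasurable
    (.of_forall fun v => by simpa using hfg v)

lemma integrable_mul_cexp_neg_inner {V : Type*} [NormedAddCommGroup V] [InnerProductSpace ℝ V]
    [MeasurableSpace V] [OpensMeasurableSpace V] {μ : Measure V} {f : V → ℂ}
    (hf : Integrable f μ) (x : V) :
    Integrable (fun ξ => f ξ * Complex.exp (-(Complex.I * ((inner ℝ x ξ : ℝ) : ℂ)))) μ := by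
  refine hf.norm.mono'
    (hf.aestronglyMeasurable.mul (by fun_prop : Continuous _).aestronglyMeasurable)
    (.of_forall fun ξ => ?_)
  simp [Complex.norm_exp]

section FourierDecay

variable {V : Type*} [NormedAddCommGroup V] [InnerProductSpace ℝ V] [FiniteDimensional ℝ V]
  [MeasurableSpace V] [BorelSpace V]

lemma integral_mul_cexp_neg_inner_eq_fourier (f : V → ℂ) (x : V) :
    ∫ ξ, f ξ * Complex.exp (-(Complex.I * ((inner ℝ x ξ : ℝ) : ℂ))) = 𝓕 f ((2 * π)⁻¹ • x) := by
  rw [Real.fourier_eq']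
  congr 1
  ext ξ
  rw [smul_eq_mul, mul_comm, real_inner_smul_right, real_inner_comm]
  congr 2
  push_cast
  field_simp

variable {F : Type*} [NormedAddCommGroup F] [NormedSpace ℂ F]

lemma pow_mul_norm_fourier_le_of_norm_iteratedFDeriv_le {f : V → F} {g : V → ℝ} {N : ℕ}
    (hf : ContDiff ℝ N f) (hg : Integrable g) (hfg : ∀ j ≤ N, ∀ v, ‖iteratedFDeriv ℝ j f v‖ ≤ g v)
    (w : V) :
    ‖w‖ ^ N * ‖𝓕 f w‖ ≤ 2 ^ N * ((N + 1) * ∫ v, g v) := by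
  have hint : ∀ j ≤ N, Integrable fun v => ‖iteratedFDeriv ℝ j f v‖ := fun j hj =>
    integrable_norm_iteratedFDeriv_of_le hf hj hg (hfg j hj)
  have hint_weighted : ∀ k j : ℕ, (k : ℕ∞) ≤ 0 → (j : ℕ∞) ≤ N →
      Integrable fun v => ‖v‖ ^ k * ‖iteratedFDeriv ℝ j f v‖ := by
    intro k j hk hj
    obtain rfl : k = 0 := by exact_mod_cast nonpos_iff_eq_zero.mp hk
    simpa using hint j (by exact_mod_cast hj)
  have h := pow_mul_norm_iteratedFDeriv_fourier_le hf hint_weighted le_rfl le_rfl w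
  simp only [norm_iteratedFDeriv_zero, pow_zero, one_mul, Nat.cast_zero, mul_zero, zero_add,
    Finset.range_one, Finset.singleton_product, Finset.sum_map, Function.Embedding.coeFn_mk] at h
  refine h.trans (mul_le_mul_of_nonneg_left ?_ (by positivity))
  calc ∑ j ∈ Finset.range (N + 1), ∫ v, ‖iteratedFDeriv ℝ j f v‖
      ≤ ∑ _j ∈ Finset.range (N + 1), ∫ v, g v := Finset.sum_le_sum fun j hj =>
        integral_mono (hint j (Finset.mem_range_succ_iff.mp hj)) hg
          (hfg j (Finset.mem_range_succ_iff.mp hj))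
    _ = (N + 1) * ∫ v, g v := by simp

lemma norm_integral_mul_cexp_neg_inner_le {a : V → ℂ} {g : V → ℝ} {N : ℕ}
    (ha : ContDiff ℝ N a) (hg : Integrable g) (hag : ∀ j ≤ N, ∀ ξ, ‖iteratedFDeriv ℝ j a ξ‖ ≤ g ξ)
    {x : V} (hx : x ≠ 0) :
    ‖∫ ξ, a ξ * Complex.exp (-(Complex.I * ((inner ℝ x ξ : ℝ) : ℂ)))‖ ≤
      (4 * π) ^ N * ((N + 1) * ∫ ξ, g ξ) * ‖x‖ ^ (-(N : ℤ)) := by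
  set w : V := (2 * π)⁻¹ • x
  have hx_eq : ‖x‖ = 2 * π * ‖w‖ := by
    rw [norm_smul, Real.norm_eq_abs, abs_of_pos (by positivity)]
    field_simp
  have hdecay := pow_mul_norm_fourier_le_of_norm_iteratedFDeriv_le ha hg hag w
  rw [integral_mul_cexp_neg_inner_eq_fourier, zpow_neg, zpow_natCast,
    le_mul_inv_iff₀ (pow_pos (norm_pos_iff.mpr hx) N), hx_eq]
  calc ‖𝓕 a w‖ * (2 * π * ‖w‖) ^ N = (2 * π) ^ N * (‖w‖ ^ N * ‖𝓕 a w‖) := by ring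
    _ ≤ (2 * π) ^ N * (2 ^ N * ((N + 1) * ∫ ξ, g ξ)) := by gcongr
    _ = (4 * π) ^ N * ((N + 1) * ∫ ξ, g ξ) := by
      rw [show (4 : ℝ) * π = 2 * π * 2 by ring, mul_pow (2 * π) 2, mul_assoc]

end FourierDecay

theorem statement1 (n : ℕ) (m : ℤ) (hm : m ≤ -(n : ℤ) - 1)
    (N : ℕ) (C : ℝ) (hC : 0 ≤ C) :
    ∃ C' : ℝ, 0 ≤ C' ∧
      ∀ a : EuclideanSpace ℝ (Fin n) → ℂ, ContDiff ℝ (⊤ : ℕ∞) a →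
        (∀ (ξ : EuclideanSpace ℝ (Fin n)) (k : ℕ), k ≤ N →
          ‖iteratedFDeriv ℝ k a ξ‖ ≤ C * (1 + ‖ξ‖) ^ (m - (k : ℤ))) →
        (∀ x : EuclideanSpace ℝ (Fin n),
          Integrable fun ξ : EuclideanSpace ℝ (Fin n) =>
            a ξ * Complex.exp (-(Complex.I * ((inner ℝ x ξ : ℝ) : ℂ)))) ∧
        ∀ x : EuclideanSpace ℝ (Fin n), x ≠ 0 →
          ‖∫ ξ : EuclideanSpace ℝ (Fin n),
              a ξ * Complex.exp (-(Complex.I * ((inner ℝ x ξ : ℝ) : ℂ)))‖ ≤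
            C' * ‖x‖ ^ (-(N : ℤ)) := by
  set g : EuclideanSpace ℝ (Fin n) → ℝ := fun ξ => C * (1 + ‖ξ‖) ^ m
  have hg : Integrable g :=
    (integrable_one_add_norm_zpow (by simp only [finrank_euclideanSpace_fin]; omega)).const_mul C
  have hg_nonneg : 0 ≤ ∫ ξ, g ξ := integral_nonneg fun ξ => mul_nonneg hC (by positivity)
  refine ⟨(4 * π) ^ N * ((N + 1) * ∫ ξ, g ξ), by positivity, fun a ha hbound => ?_⟩
  have ha_N : ContDiff ℝ N a := ha.of_le (by exact_mod_cast le_top)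
  have hag : ∀ j ≤ N, ∀ ξ, ‖iteratedFDeriv ℝ j a ξ‖ ≤ g ξ := fun j hj ξ =>
    (hbound ξ j hj).trans <| mul_le_mul_of_nonneg_left
      (zpow_le_zpow_right₀ (le_add_of_nonneg_right (norm_nonneg ξ)) (by omega)) hC
  have ha_int : Integrable a := (integrable_norm_iff ha.continuous.aestronglyMeasurable).mp <| by
    simpa using integrable_norm_iteratedFDeriv_of_le ha_N (Nat.zero_le N) hg (hag 0 (Nat.zero_le N))
  exact ⟨integrable_mul_cexp_neg_inner ha_int,
    fun x hx => norm_integral_mul_cexp_neg_inner_le ha_N hg hag hx⟩
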